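/- arXiv:2605.15021 — 2 statements merged into one kernel-verified Lean document; each statement's English description precedes it below -/
import Mathlib

section
/- Let n, d_u, d_v, t be real numbers with 2n/3 ≤ d_u ≤ d_v ≤ n, d_u + d_v - n ≤ t, and (d_u - t ≤ n - d_v and d_v - t ≤ n - d_u and t ≤ d_u). Then (d_u - t)·(d_v - t)·t ≤ (n - d_u)·(n - d_v)·(d_u + d_v - n). -/
/-!
Write `a = n - du`, `b = n - dv`, `s = du + dv - n` and `x = t - s ≥ 0`, so that the left side is
`(b - x) * (a - x) * (s + x)` and the right side is `a * b * s`. Their difference factors as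
`x * ((b - x) * (s + x - a) + a * s)`, and every factor is nonnegative: `b - x = du - t`, and
`s + x - a = t + du - n ≥ 2 * du + dv - 2 * n ≥ 0` is where `du ≥ 2n/3` enters.
-/

theorem sub_mul_sub_mul_add_le {a b s x : ℝ} (hx : 0 ≤ x) (hxb : x ≤ b) (has : a ≤ s + x)
    (ha : 0 ≤ a) (hs : 0 ≤ s) :
    (b - x) * (a - x) * (s + x) ≤ a * b * s := by
  have key : a * b * s - (b - x) * (a - x) * (s + x) = x * ((b - x) * (s + x - a) + a * s) := by
    ring
  have hgap : 0 ≤ x * ((b - x) * (s + x - a) + a * s) :=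
    mul_nonneg hx <|
      add_nonneg (mul_nonneg (sub_nonneg.2 hxb) (sub_nonneg.2 has)) (mul_nonneg ha hs)
  linarith

theorem case_i_ineq_general (n du dv t : ℝ) (h1 : 2 * n / 3 ≤ du) (h2 : du ≤ dv)
    (h4 : du + dv - n ≤ t) (h7 : t ≤ du) :
    (du - t) * (dv - t) * t ≤ (n - du) * (n - dv) * (du + dv - n) := by
  have h := sub_mul_sub_mul_add_le (a := n - du) (b := n - dv) (s := du + dv - n)
    (x := t - (du + dv - n)) (by linarith) (by linarith) (by linarith) (by linarith)
    (by linarith)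
  calc (du - t) * (dv - t) * t
      = ((n - dv) - (t - (du + dv - n))) * ((n - du) - (t - (du + dv - n)))
        * ((du + dv - n) + (t - (du + dv - n))) := by ring
    _ ≤ (n - du) * (n - dv) * (du + dv - n) := h

theorem case_i_ineq (n du dv t : ℝ) (h1 : 2 * n / 3 ≤ du) (h2 : du ≤ dv) (h3 : dv ≤ n)
    (h4 : du + dv - n ≤ t) (h5 : du - t ≤ n - dv) (h6 : dv - t ≤ n - du) (h7 : t ≤ du) :
    (du - t) * (dv - t) * t ≤ (n - du) * (n - dv) * (du + dv - n) :=
  case_i_ineq_general n du dv t h1 h2 h4 h7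
end

section
/- Let n, k be real numbers with k ≥ 3, n ≥ 0, and let d_u, d_v, t be real numbers with 0 ≤ t ≤ d_u ≤ d_v ≤ n, d_u ≤ 2n/3, d_u - t ≤ n - d_v, and d_v - t ≤ n - d_u. Then (d_u - t)(d_v - t)·t ≤ ((k-3)/k)·n·(n - d_u)(n - d_v) + n³/k³. -/
/-! Write `a = d_u - t`, `b = d_v - t` and `s = (k - 3) n / k`. The constraints give
`a b ≤ (n - d_u)(n - d_v)` and `a + b + (t - s) ≤ n - s = 3 n / k`. Splitting `t = s + (t - s)`,
the part `a b s` is bounded by the first term, and `a b (t - s) ≤ (n / k)³` by AM-GM for three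
numbers, the third of which may be negative. -/

lemma mul_mul_le_pow_three_of_add_add_le {x y z c : ℝ} (hx : 0 ≤ x) (hy : 0 ≤ y) (hz : 0 ≤ z)
    (h : x + y + z ≤ 3 * c) : x * y * z ≤ c ^ 3 := by
  nlinarith [mul_nonneg hx (sq_nonneg (y - z)), mul_nonneg hy (sq_nonneg (z - x)),
    mul_nonneg hz (sq_nonneg (x - y)), mul_nonneg (add_nonneg (add_nonneg hx hy) hz)
      (add_nonneg (add_nonneg (sq_nonneg (x - y)) (sq_nonneg (y - z))) (sq_nonneg (z - x))),
    pow_le_pow_left₀ (by positivity : 0 ≤ x + y + z) h 3]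

lemma mul_mul_le_pow_three_of_add_add_le_of_bound_nonneg {a b r c : ℝ} (ha : 0 ≤ a) (hb : 0 ≤ b)
    (hc : 0 ≤ c) (h : a + b + r ≤ 3 * c) : a * b * r ≤ c ^ 3 := by
  rcases le_total r 0 with hr | hr
  · exact (mul_nonpos_of_nonneg_of_nonpos (mul_nonneg ha hb) hr).trans (by positivity)
  · exact mul_mul_le_pow_three_of_add_add_le ha hb hr h

theorem case_ii_ineq_general (n k du dv t : ℝ) (hk : 3 ≤ k) (hn : 0 ≤ n)
    (htu : t ≤ du) (huv : du ≤ dv)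
    (h1 : du - t ≤ n - dv) (h2 : dv - t ≤ n - du) :
    (du - t) * (dv - t) * t ≤
      ((k - 3) / k) * n * (n - du) * (n - dv) + n ^ 3 / k ^ 3 := by
  set s := (k - 3) / k * n with hs
  have hk0 : 0 < k := by linarith
  have hs0 : 0 ≤ s := by positivity
  have ha : 0 ≤ du - t := by linarith
  have hb : 0 ≤ dv - t := by linarith
  have hab : (du - t) * (dv - t) ≤ (n - dv) * (n - du) := mul_le_mul h1 h2 hb (by linarith)
  have hsum : (du - t) + (dv - t) + (t - s) ≤ 3 * (n / k) := by
    have : 3 * (n / k) = n - s := by rw [hs]; field_simp; ring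
    linarith
  have hcube : (du - t) * (dv - t) * (t - s) ≤ (n / k) ^ 3 :=
    mul_mul_le_pow_three_of_add_add_le_of_bound_nonneg ha hb (by positivity) hsum
  calc (du - t) * (dv - t) * t = (du - t) * (dv - t) * s + (du - t) * (dv - t) * (t - s) := by ring
    _ ≤ (n - dv) * (n - du) * s + (n / k) ^ 3 := by gcongr
    _ = s * (n - du) * (n - dv) + n ^ 3 / k ^ 3 := by rw [div_pow]; ring

theorem case_ii_ineq (n k du dv t : ℝ) (hk : 3 ≤ k) (hn : 0 ≤ n)
    (ht0 : 0 ≤ t) (htu : t ≤ du) (huv : du ≤ dv) (hvn : dv ≤ n)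
    (hu23 : du ≤ 2 * n / 3) (h1 : du - t ≤ n - dv) (h2 : dv - t ≤ n - du) :
    (du - t) * (dv - t) * t ≤
      ((k - 3) / k) * n * (n - du) * (n - dv) + n ^ 3 / k ^ 3 :=
  case_ii_ineq_general n k du dv t hk hn htu huv h1 h2
end
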